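/- Let A be a nonnegative square matrix and π an equitable partition of its index set (i.e., every block A[X_i : X_j] of A with respect to π has constant row sums). Then the spectral radius of A equals the spectral radius of the left quotient matrix Q_l(A) = Λ^{-1} S^T A S, where S is the characteristic matrix of π and Λ = S^T S. -/

import Mathlib

/-- The spectral radius of a real matrix: the largest modulus of a (complex) eigenvalue. -/
noncomputable def specRad {m : Type*} [Fintype m] [DecidableEq m] (A : Matrix m m ℝ) : ℝ :=
  sSup (Set.image (fun z : ℂ => ‖z‖) (spectrum ℂ (A.map (fun r => (r : ℂ)))))

/-- The cell of the partition classified by `c` with label `q`. -/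
def cell {V Q : Type*} [Fintype V] [DecidableEq Q] (c : V → Q) (q : Q) : Finset V :=
  Finset.univ.filter (fun z => c z = q)

/-- The left quotient matrix `Λ⁻¹ Sᵀ A S` of `A` with respect to the partition classified
by `c`. -/
noncomputable def quotMat {V Q : Type*} [Fintype V] [DecidableEq Q]
    (A : Matrix V V ℝ) (c : V → Q) : Matrix Q Q ℝ :=
  fun q q' => ((cell c q).card : ℝ)⁻¹ * ∑ x ∈ cell c q, ∑ y ∈ cell c q', A x y

/-- The partition classified by `c` is equitable for `A`: each block has constant row sums. -/
def IsEquitable {V Q : Type*} [Fintype V] [DecidableEq Q] (A : Matrix V V ℝ) (c : V → Q) :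
    Prop :=
  ∀ (q : Q) (x y : V), c x = c y → ∑ z ∈ cell c q, A x z = ∑ z ∈ cell c q, A y z

/-!
If `S` is the characteristic matrix of the partition and `B = Q_l(A)`, equitability says
exactly `A S = S B`, hence `Aᵏ S = S Bᵏ` for all `k`. Multiplying by the all-ones vector, the
row sums of `Aᵏ` at `x` are those of `Bᵏ` at the cell of `x`. For nonnegative matrices the
`ℓ∞`-operator norm is the largest row sum, so `‖Aᵏ‖ = ‖Bᵏ‖` for all `k`, and Gelfand's formula
gives equal spectral radii.
-/

open Finset

attribute [local instance] Matrix.linftyOpSeminormedAddCommGroup Matrix.linftyOpNormedRing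
  Matrix.linftyOpNormedAlgebra

theorem sSup_norm_spectrum_eq_toReal_spectralRadius {A : Type*} [NormedRing A]
    [NormedAlgebra ℂ A] [CompleteSpace A] (a : A) :
    sSup ((fun z : ℂ => ‖z‖) '' spectrum ℂ a) = (spectralRadius ℂ a).toReal := by
  rcases subsingleton_or_nontrivial A with hA | hA
  · simp [spectrum.of_subsingleton, spectralRadius]
  obtain ⟨z, hz, hzρ⟩ := spectrum.exists_nnnorm_eq_spectralRadius a
  rw [← hzρ]
  refine IsGreatest.csSup_eq ⟨⟨z, hz, rfl⟩, ?_⟩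
  rintro _ ⟨k, hk, rfl⟩
  have hkz : (‖k‖₊ : ENNReal) ≤ ‖z‖₊ := hzρ ▸ le_iSup₂ (α := ENNReal) k hk
  exact_mod_cast ENNReal.coe_le_coe.mp hkz

theorem spectralRadius_eq_of_nnnorm_pow_eq {A B : Type*} [NormedRing A] [NormedAlgebra ℂ A]
    [CompleteSpace A] [NormedRing B] [NormedAlgebra ℂ B] [CompleteSpace B] {a : A} {b : B}
    (h : ∀ k : ℕ, ‖a ^ k‖₊ = ‖b ^ k‖₊) : spectralRadius ℂ a = spectralRadius ℂ b :=
  tendsto_nhds_unique (spectrum.pow_nnnorm_pow_one_div_tendsto_nhds_spectralRadius a) <| by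
    simpa only [h] using spectrum.pow_nnnorm_pow_one_div_tendsto_nhds_spectralRadius b

theorem specRad_eq_toReal_spectralRadius {m : Type*} [Fintype m] [DecidableEq m]
    (M : Matrix m m ℝ) : specRad M = (spectralRadius ℂ (M.map Complex.ofRealHom)).toReal :=
  sSup_norm_spectrum_eq_toReal_spectralRadius _

namespace Matrix

variable {m n R : Type*}

theorem pow_mul_eq_mul_pow_of_mul_eq [Fintype m] [DecidableEq m] [Fintype n] [DecidableEq n]
    [Semiring R] {A : Matrix m m R} {S : Matrix m n R} {B : Matrix n n R} (h : A * S = S * B)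
    (k : ℕ) : A ^ k * S = S * B ^ k := by
  induction k with
  | zero => simp
  | succ k ih => rw [pow_succ', Matrix.mul_assoc, ih, ← Matrix.mul_assoc, h, Matrix.mul_assoc,
      ← pow_succ']

theorem linfty_opNNNorm_map_eq [Fintype m] [Fintype n] {α β : Type*} [SeminormedAddCommGroup α]
    [SeminormedAddCommGroup β] (A : Matrix m n α) (f : α → β) (hf : ∀ a, ‖f a‖₊ = ‖a‖₊) :
    ‖A.map f‖₊ = ‖A‖₊ := by
  simp only [linfty_opNNNorm_def, map_apply, hf]

theorem linfty_opNNNorm_eq_sup_toNNReal_sum [Fintype m] [Fintype n] {M : Matrix m n ℝ}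
    (hM : ∀ i j, 0 ≤ M i j) : ‖M‖₊ = univ.sup fun i => (∑ j, M i j).toNNReal := by
  rw [linfty_opNNNorm_def]
  refine sup_congr rfl fun i _ => ?_
  rw [Real.toNNReal_sum_of_nonneg fun j _ => hM i j]
  exact sum_congr rfl fun j _ => by rw [Real.nnnorm_of_nonneg (hM i j), Real.toNNReal_of_nonneg]

end Matrix

section CharMat

variable {U V Q W : Type*} [DecidableEq Q] (R : Type*) [Semiring R]

def charMat (c : V → Q) : Matrix V Q R :=
  Matrix.of fun x q => if c x = q then 1 else 0

variable {R}

theorem mul_charMat_apply [Fintype V] (M : Matrix U V R) (c : V → Q) (x : U) (q : Q) :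
    (M * charMat R c) x q = ∑ y ∈ cell c q, M x y := by
  simp [Matrix.mul_apply, charMat, cell, sum_filter]

theorem charMat_mul_apply [Fintype Q] (c : V → Q) (N : Matrix Q W R) (x : V) (w : W) :
    (charMat R c * N) x w = N (c x) w := by
  simp [Matrix.mul_apply, charMat]

theorem sum_mul_charMat_apply [Fintype V] [Fintype Q] (M : Matrix U V R) (c : V → Q) (x : U) :
    ∑ q, (M * charMat R c) x q = ∑ y, M x y := by
  simp only [mul_charMat_apply, cell]
  exact sum_fiberwise univ c (M x)

end CharMat

section Equitable

variable {V Q : Type*} [Fintype V] [DecidableEq Q] {A : Matrix V V ℝ} {c : V → Q}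

theorem quotMat_nonneg (h0 : ∀ i j, 0 ≤ A i j) (q q' : Q) : 0 ≤ quotMat A c q q' :=
  mul_nonneg (by positivity) (sum_nonneg fun x _ => sum_nonneg fun y _ => h0 x y)

namespace IsEquitable

theorem quotMat_apply (heq : IsEquitable A c) (x : V) (q : Q) :
    quotMat A c (c x) q = ∑ y ∈ cell c q, A x y := by
  have hx : x ∈ cell c (c x) := by simp [cell]
  have hcard : ((cell c (c x)).card : ℝ) ≠ 0 := by
    exact_mod_cast (card_pos.mpr ⟨x, hx⟩).ne'
  have hsum : ∑ z ∈ cell c (c x), ∑ y ∈ cell c q, A z y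
      = (cell c (c x)).card * ∑ y ∈ cell c q, A x y := by
    rw [sum_congr rfl fun z hz => heq q z x (by simpa [cell] using hz), sum_const, nsmul_eq_mul]
  rw [quotMat, hsum, inv_mul_cancel_left₀ hcard]

variable [Fintype Q]

theorem mul_charMat (heq : IsEquitable A c) : A * charMat ℝ c = charMat ℝ c * quotMat A c := by
  ext x q
  rw [mul_charMat_apply, charMat_mul_apply, heq.quotMat_apply]

variable [DecidableEq V]

theorem sum_pow_apply (heq : IsEquitable A c) (k : ℕ) (x : V) :
    ∑ j, (A ^ k) x j = ∑ q, (quotMat A c ^ k) (c x) q := by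
  rw [← sum_mul_charMat_apply _ c, Matrix.pow_mul_eq_mul_pow_of_mul_eq heq.mul_charMat]
  simp only [charMat_mul_apply]

theorem linfty_opNNNorm_pow_eq (heq : IsEquitable A c) (h0 : ∀ i j, 0 ≤ A i j)
    (hsurj : Function.Surjective c) (k : ℕ) : ‖A ^ k‖₊ = ‖quotMat A c ^ k‖₊ := by
  rw [Matrix.linfty_opNNNorm_eq_sup_toNNReal_sum (Matrix.pow_apply_nonneg h0 k),
    Matrix.linfty_opNNNorm_eq_sup_toNNReal_sum (Matrix.pow_apply_nonneg (quotMat_nonneg h0) k)]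
  simp only [heq.sum_pow_apply]
  set rowSum := fun q => (∑ q', (quotMat A c ^ k) q q').toNNReal
  calc univ.sup (rowSum ∘ c) = (univ.image c).sup rowSum := (sup_image univ c rowSum).symm
    _ = univ.sup rowSum := by rw [image_univ_of_surjective hsurj]

end IsEquitable

end Equitable

theorem stmt5 {n m : ℕ} (A : Matrix (Fin n) (Fin n) ℝ) (h0 : ∀ i j, 0 ≤ A i j)
    (c : Fin n → Fin m) (hsurj : Function.Surjective c) (heq : IsEquitable A c) :
    specRad A = specRad (quotMat A c) := by
  rw [specRad_eq_toReal_spectralRadius, specRad_eq_toReal_spectralRadius]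
  congr 1
  refine spectralRadius_eq_of_nnnorm_pow_eq fun k => ?_
  rw [← Matrix.map_pow, ← Matrix.map_pow,
    Matrix.linfty_opNNNorm_map_eq _ Complex.ofRealHom Complex.nnnorm_real,
    Matrix.linfty_opNNNorm_map_eq _ Complex.ofRealHom Complex.nnnorm_real,
    heq.linfty_opNNNorm_pow_eq h0 hsurj k]
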